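/- If f: ℕ → E(q) is q-holonomic and h: ℕ → ℕ is an affine map h(n) = αn + β with α, β ∈ ℕ, then the composite n ↦ f(αn + β) is q-holonomic. -/

import Mathlib

open scoped BigOperators

/-- A sequence `f : ℕ → E(q)` is `q`-holonomic if it satisfies a nontrivial linear
recursion `∑_{j=0}^d a_j(q, qⁿ) f(n+j) = 0` with coefficients `a_j ∈ E[u,v]`, not all zero. -/
def IsQHolonomic {E : Type} [Field E] (f : ℕ → RatFunc E) : Prop :=
  ∃ (d : ℕ) (a : ℕ → MvPolynomial (Fin 2) E),
    (∃ j ≤ d, a j ≠ 0) ∧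
    ∀ n : ℕ, ∑ j ∈ Finset.range (d + 1),
      (MvPolynomial.aeval ![RatFunc.X, (RatFunc.X : RatFunc E) ^ n] (a j)) * f (n + j) = 0

/-!
Let `K = E(u, v)` act on germs at infinity of sequences `ℕ → E(q)` through
`p ↦ (n ↦ p(q, qⁿ))`; this is well defined because a nonzero `p` has `p(q, qⁿ) ≠ 0` for all
large `n` (Kronecker substitution). For `α > 0`, the substitution `v ↦ u^(β+r) v^α` turns the
recurrence of `f` at `αn + β + r` into a `K`-linear relation among the germs of
`n ↦ f(αn + β + k)` with nonzero leading coefficient, so all these germs lie in a `K`-space of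
dimension at most the order `d` of the recurrence. Hence the `d + 1` germs of
`n ↦ f(α(n + t) + β)`, `t ≤ d`, are dependent; clearing denominators gives a recurrence for
`f(αn + β)` valid for large `n`, and multiplying it by `∏_{k<N} (v - u^k)` makes it valid for all
`n`.
-/

open Filter Finset Submodule

theorem MvPolynomial.aeval_X_X_pow_ne_zero {R : Type*} [CommSemiring R]
    {p : MvPolynomial (Fin 2) R} (hp : p ≠ 0) {n : ℕ} (hn : ∀ s ∈ p.support, s 0 < n) :
    aeval ![(Polynomial.X : Polynomial R), Polynomial.X ^ n] p ≠ 0 := by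
  obtain ⟨s, hs⟩ := ne_zero_iff.mp hp
  -- base-`n` digits: `t ↦ t 0 + n * t 1` is injective on the support
  have hinj : ∀ t ∈ p.support, s 0 + n * s 1 = t 0 + n * t 1 → t = s := by
    intro t ht heq
    have hs0 := hn s (mem_support_iff.mpr hs)
    have h0 : t 0 = s 0 := by
      simpa [Nat.add_mul_mod_self_left, Nat.mod_eq_of_lt (hn t ht), Nat.mod_eq_of_lt hs0]
        using congrArg (· % n) heq.symm
    have h1 : t 1 = s 1 := Nat.eq_of_mul_eq_mul_left (show 0 < n by omega) (by omega)
    ext i; fin_cases i <;> assumption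
  intro h
  apply hs
  have := congrArg (Polynomial.coeff · (s 0 + n * s 1)) h
  rw [as_sum p, map_sum, Polynomial.finsetSum_coeff, Finset.sum_eq_single s] at this
  · simpa [aeval_monomial, Finsupp.prod_fintype, ← pow_mul, ← pow_add] using this
  · intro t ht hts
    simpa [aeval_monomial, Finsupp.prod_fintype, ← pow_mul, ← pow_add] using
      fun h => absurd (hinj t ht h) hts
  · simp_all

theorem MvPolynomial.X_one_sub_X_zero_pow_ne_zero {R : Type*} [CommRing R] [Nontrivial R]
    (k : ℕ) : (X 1 - X 0 ^ k : MvPolynomial (Fin 2) R) ≠ 0 := by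
  rw [sub_ne_zero]
  intro h
  simpa [coeff_X_pow, Finsupp.single_eq_single_iff] using congrArg (coeff (Finsupp.single 1 1)) h

theorem Submodule.mem_span_of_linear_recurrence {K M : Type*} [DivisionRing K] [AddCommGroup M]
    [Module K M] {v : ℕ → M} {d : ℕ} {c : ℕ → ℕ → K} (hc : ∀ r, c r d ≠ 0)
    (hrec : ∀ r, ∑ j ∈ range (d + 1), c r j • v (r + j) = 0) (k : ℕ) :
    v k ∈ span K (Set.range fun i : Fin d => v i) := by
  induction k using Nat.strong_induction_on with
  | _ k ih =>
    rcases lt_or_ge k d with hk | hk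
    · exact subset_span ⟨⟨k, hk⟩, rfl⟩
    obtain ⟨r, rfl⟩ := Nat.exists_eq_add_of_le' hk
    have hlast : c r d • v (r + d) = -∑ j ∈ range d, c r j • v (r + j) :=
      eq_neg_of_add_eq_zero_right (by rw [← sum_range_succ]; exact hrec r)
    rw [← inv_smul_smul₀ (hc r) (v (r + d)), hlast]
    refine smul_mem _ _ (neg_mem (sum_mem fun j hj => smul_mem _ _ (ih _ ?_)))
    have := mem_range.mp hj
    omega

theorem not_linearIndependent_of_linear_recurrence {K M : Type*} [DivisionRing K]
    [AddCommGroup M] [Module K M] {v : ℕ → M} {d : ℕ} {c : ℕ → ℕ → K} (hc : ∀ r, c r d ≠ 0)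
    (hrec : ∀ r, ∑ j ∈ range (d + 1), c r j • v (r + j) = 0) (g : Fin (d + 1) → ℕ) :
    ¬LinearIndependent K (v ∘ g) := by
  intro hli
  have hle : span K (Set.range (v ∘ g)) ≤ span K (Set.range fun i : Fin d => v i) :=
    span_le.mpr <| Set.range_subset_iff.mpr fun t => mem_span_of_linear_recurrence hc hrec (g t)
  have := Module.Finite.span_of_finite K (Set.finite_range fun i : Fin d => v i)
  have := (linearIndependent_iff_card_le_finrank_span.mp hli).trans
    ((finrank_mono hle).trans (finrank_range_le_card _))
  simp at this

namespace QHolonomic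

variable {E : Type} [Field E]

variable (E) in
noncomputable def qEval (n : ℕ) : MvPolynomial (Fin 2) E →ₐ[E] RatFunc E :=
  MvPolynomial.aeval ![RatFunc.X, RatFunc.X ^ n]

theorem qEval_eq_algebraMap (n : ℕ) (p : MvPolynomial (Fin 2) E) :
    qEval E n p = algebraMap (Polynomial E) (RatFunc E)
      (MvPolynomial.aeval ![Polynomial.X, Polynomial.X ^ n] p) := by
  rw [qEval, ← MvPolynomial.aeval_algebraMap_apply]
  congr 2
  ext i
  fin_cases i <;> simp [RatFunc.algebraMap_X]

theorem eventually_qEval_ne_zero {p : MvPolynomial (Fin 2) E} (hp : p ≠ 0) :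
    ∀ᶠ n in atTop, qEval E n p ≠ 0 := by
  filter_upwards [eventually_gt_atTop (p.support.sup (· 0))] with n hn
  rw [qEval_eq_algebraMap, ne_eq, map_eq_zero_iff _ (IsFractionRing.injective _ _)]
  exact MvPolynomial.aeval_X_X_pow_ne_zero hp fun s hs => (le_sup (f := (· 0)) hs).trans_lt hn

variable (E) in
noncomputable def affineSubst (α c : ℕ) : MvPolynomial (Fin 2) E →ₐ[E] MvPolynomial (Fin 2) E :=
  MvPolynomial.aeval ![MvPolynomial.X 0, MvPolynomial.X 0 ^ c * MvPolynomial.X 1 ^ α]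

theorem qEval_affineSubst (α c n : ℕ) (p : MvPolynomial (Fin 2) E) :
    qEval E n (affineSubst E α c p) = qEval E (α * n + c) p := by
  rw [affineSubst, ← AlgHom.comp_apply, MvPolynomial.comp_aeval, qEval]
  congr 2
  ext i
  fin_cases i <;> simp [← pow_mul, ← pow_add, mul_comm, add_comm]

theorem affineSubst_ne_zero {α : ℕ} (hα : 0 < α) (c : ℕ) {p : MvPolynomial (Fin 2) E}
    (hp : p ≠ 0) : affineSubst E α c p ≠ 0 := by
  intro h
  have hmap : Tendsto (fun n => α * n + c) atTop atTop :=
    tendsto_atTop_mono (fun n => show n ≤ α * n + c by nlinarith) tendsto_id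
  obtain ⟨n, hn⟩ := (hmap.eventually (eventually_qEval_ne_zero hp)).exists
  exact hn (by rw [← qEval_affineSubst, h, map_zero])

variable (E) in
abbrev CoeffField : Type := FractionRing (MvPolynomial (Fin 2) E)

variable (E) in
abbrev SeqGerm : Type := (atTop : Filter ℕ).Germ (RatFunc E)

variable (E) in
noncomputable def qEvalGerm : MvPolynomial (Fin 2) E →+* SeqGerm E :=
  (Germ.coeRingHom atTop).comp (RingHom.pi fun n => (qEval E n).toRingHom)

theorem isUnit_qEvalGerm {p : MvPolynomial (Fin 2) E} (hp : p ≠ 0) : IsUnit (qEvalGerm E p) := by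
  refine .of_mul_eq_one (fun n => (qEval E n p)⁻¹ : ℕ → RatFunc E) (Germ.coe_eq.mpr ?_)
  exact (eventually_qEval_ne_zero hp).mono fun n hn => mul_inv_cancel₀ hn

noncomputable scoped instance : Algebra (CoeffField E) (SeqGerm E) :=
  (IsLocalization.lift (M := nonZeroDivisors (MvPolynomial (Fin 2) E)) fun y =>
    isUnit_qEvalGerm (nonZeroDivisors.ne_zero y.2)).toAlgebra

theorem algebraMap_smul_germ (p : MvPolynomial (Fin 2) E) (u : ℕ → RatFunc E) :
    algebraMap _ (CoeffField E) p • (u : SeqGerm E) = ↑(fun n => qEval E n p * u n) := by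
  rw [Algebra.smul_def, RingHom.algebraMap_toAlgebra, IsLocalization.lift_eq]
  rfl

theorem germ_sum_qEval_mul {ι : Type*} (s : Finset ι) (p : ι → MvPolynomial (Fin 2) E)
    (u : ι → ℕ → RatFunc E) :
    (↑(fun n => ∑ i ∈ s, qEval E n (p i) * u i n) : SeqGerm E) =
      ∑ i ∈ s, algebraMap _ (CoeffField E) (p i) • (u i : SeqGerm E) := by
  simp_rw [algebraMap_smul_germ, ← Finset.sum_fn]
  exact map_sum (Germ.coeAddHom atTop) _ s

theorem germ_recurrence_comp_affine {f : ℕ → RatFunc E} {d : ℕ}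
    {a : ℕ → MvPolynomial (Fin 2) E}
    (hrec : ∀ n, ∑ j ∈ range (d + 1), qEval E n (a j) * f (n + j) = 0) (α β r : ℕ) :
    ∑ j ∈ range (d + 1), algebraMap _ (CoeffField E) (affineSubst E α (β + r) (a j)) •
      (↑(fun n => f (α * n + β + (r + j))) : SeqGerm E) = 0 := by
  have hzero : (fun n => ∑ j ∈ range (d + 1),
      qEval E n (affineSubst E α (β + r) (a j)) * f (α * n + β + (r + j))) = 0 :=
    funext fun n => by simpa [qEval_affineSubst, add_assoc] using hrec (α * n + β + r)
  rw [← germ_sum_qEval_mul, hzero]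
  rfl

end QHolonomic

open QHolonomic

namespace IsQHolonomic

variable {E : Type} [Field E]

theorem exists_leading_ne_zero {f : ℕ → RatFunc E} (hf : IsQHolonomic f) :
    ∃ (d : ℕ) (a : ℕ → MvPolynomial (Fin 2) E), a d ≠ 0 ∧
      ∀ n, ∑ j ∈ range (d + 1), qEval E n (a j) * f (n + j) = 0 := by
  classical
  obtain ⟨D, a, ⟨j₀, hj₀, ha⟩, hrec⟩ := hf
  refine ⟨Nat.findGreatest (a · ≠ 0) D, a, Nat.findGreatest_spec (P := (a · ≠ 0)) hj₀ ha,
    fun n => ?_⟩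
  refine (sum_subset (range_subset_range.mpr (by simpa using Nat.findGreatest_le D))
    fun j hjD hj => ?_).trans (hrec n)
  rw [mem_range] at hjD hj
  rw [not_not.mp (Nat.findGreatest_is_greatest (P := (a · ≠ 0)) (n := D) (by omega) (by omega)),
    map_zero, zero_mul]

theorem of_eventually {f : ℕ → RatFunc E} {d : ℕ} {a : ℕ → MvPolynomial (Fin 2) E}
    (ha : ∃ j ≤ d, a j ≠ 0)
    (hrec : ∀ᶠ n in atTop, ∑ j ∈ range (d + 1), qEval E n (a j) * f (n + j) = 0) :
    IsQHolonomic f := by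
  obtain ⟨N, hN⟩ := eventually_atTop.mp hrec
  set Q : MvPolynomial (Fin 2) E := ∏ k ∈ range N, (MvPolynomial.X 1 - MvPolynomial.X 0 ^ k)
  have hQ : Q ≠ 0 := prod_ne_zero_iff.mpr fun k _ => MvPolynomial.X_one_sub_X_zero_pow_ne_zero k
  have hQN : ∀ n < N, qEval E n Q = 0 := fun n hn => by
    rw [map_prod]
    exact prod_eq_zero (mem_range.mpr hn) (by simp [qEval])
  obtain ⟨j, hj, hja⟩ := ha
  refine ⟨d, fun j => Q * a j, ⟨j, hj, mul_ne_zero hQ hja⟩, fun n => ?_⟩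
  change ∑ j ∈ range (d + 1), qEval E n (Q * a j) * f (n + j) = 0
  simp_rw [map_mul, mul_assoc, ← mul_sum]
  rcases lt_or_ge n N with hn | hn
  · rw [hQN n hn, zero_mul]
  · rw [hN n hn, mul_zero]

theorem of_not_linearIndependent {f : ℕ → RatFunc E} {d : ℕ}
    (h : ¬LinearIndependent (CoeffField E) fun t : Fin (d + 1) => (↑(f <| · + t) : SeqGerm E)) :
    IsQHolonomic f := by
  obtain ⟨c, hc, t₀, ht₀⟩ := Fintype.not_linearIndependent_iff.mp h
  obtain ⟨b, hb⟩ :=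
    IsLocalization.exist_integer_multiples_of_finite (nonZeroDivisors (MvPolynomial (Fin 2) E)) c
  choose p hp using hb
  simp only [Algebra.smul_def] at hp
  have hb₀ : algebraMap _ (CoeffField E) (b : MvPolynomial (Fin 2) E) ≠ 0 :=
    IsFractionRing.to_map_ne_zero_of_mem_nonZeroDivisors b.2
  have hrel : ∀ᶠ n in atTop, ∑ t : Fin (d + 1), qEval E n (p t) * f (n + t) = 0 := by
    refine Germ.coe_eq.mp ((germ_sum_qEval_mul _ _ _).trans ?_)
    simp_rw [hp, mul_smul, ← smul_sum, hc, smul_zero]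
    rfl
  set a := Function.extend Fin.val p 0
  have ha : ∀ t : Fin (d + 1), a t = p t := Fin.val_injective.extend_apply p 0
  refine of_eventually (a := a) ⟨t₀, Nat.lt_succ_iff.mp t₀.2, fun h0 => ht₀ ?_⟩ ?_
  · simpa [← ha, h0, hb₀] using hp t₀
  · simpa only [← Fin.sum_univ_eq_sum_range, ha] using hrel

theorem const (c : RatFunc E) : IsQHolonomic fun _ => c := by
  refine ⟨1, fun j => if j = 0 then 1 else -1, ⟨0, zero_le_one, by simp⟩, fun n => ?_⟩
  simp [sum_range_succ]

end IsQHolonomic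

theorem IsQHolonomic.comp_affine_general {E : Type} [Field E] {f : ℕ → RatFunc E}
    (hf : IsQHolonomic f) (α β : ℕ) :
    IsQHolonomic (fun n => f (α * n + β)) := by
  rcases Nat.eq_zero_or_pos α with rfl | hα
  · simpa using IsQHolonomic.const (f β)
  obtain ⟨d, a, had, hrec⟩ := hf.exists_leading_ne_zero
  have hlead : ∀ r, algebraMap _ (CoeffField E) (affineSubst E α (β + r) (a d)) ≠ 0 :=
    fun r => IsFractionRing.to_map_eq_zero_iff.not.mpr (affineSubst_ne_zero hα _ had)
  set v : ℕ → SeqGerm E := fun k => ↑(fun n => f (α * n + β + k))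
  have hshift : (fun t : Fin (d + 1) => (↑((fun n => f (α * n + β)) <| · + t) : SeqGerm E)) =
      v ∘ fun t : Fin (d + 1) => α * t := by
    ext t
    simp only [v, Function.comp_apply, mul_add, add_right_comm]
  refine IsQHolonomic.of_not_linearIndependent (d := d) ?_
  rw [hshift]
  exact not_linearIndependent_of_linear_recurrence hlead (germ_recurrence_comp_affine hrec α β) _

/-- If `f` is `q`-holonomic and `h(n) = αn + β` is an affine map with `α, β ∈ ℕ`, then
the composite `n ↦ f(αn + β)` is `q`-holonomic. -/
theorem IsQHolonomic.comp_affine {E : Type} [Field E] [CharZero E] {f : ℕ → RatFunc E}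
    (hf : IsQHolonomic f) (α β : ℕ) :
    IsQHolonomic (fun n => f (α * n + β)) :=
  IsQHolonomic.comp_affine_general hf α β
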